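/- arXiv:2111.07618 — 4 statements merged into one kernel-verified Lean document; each statement's English description precedes it below -/
import Mathlib

section
/- Let g : ℝⁿ → ℝ be differentiable with L-Lipschitz gradient, h₁ : ℝⁿ → ℝ ∪ {+∞} a proper lower semicontinuous convex function, h₂ : ℝⁿ → ℝ a continuous convex function, and f = g + h₁ − h₂. Suppose sequences {x_k}, {x_k⁺}, {ξ_k}, {r_k}, {B_k}, {η_k} satisfy, for every k: h₁(x_k) and h₁(x_k⁺) are finite; ξ_k ∈ ∂h₂(x_k); B_k is a symmetric matrix with m‖u‖² ≤ uᵀB_k u ≤ M‖u‖² for all u (with constants 0 < m ≤ M); d_k = x_k⁺ − x_k; r_k − (∇g(x_k) − ξ_k) − B_k d_k ∈ ∂h₁(x_k⁺); ‖r_k‖_{B_k⁻¹} ≤ (1 − θ_k)‖d_k‖_{B_k} with θ_k ∈ [θ̄, 1] for a constant θ̄ ∈ (0,1]; x_{k+1} = x_k + η_k d_k with η_k ∈ [η̄, 1] for a constant η̄ > 0; and the line-search condition f(x_{k+1}) ≤ f(x_k) + δ η_k ((∇g(x_k) − ξ_k)ᵀ d_k + h₁(x_k⁺) − h₁(x_k))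 holds with a constant δ ∈ (0,1). If f is bounded below, then ‖d_k‖ → 0 as k → ∞. -/
open Matrix Filter Topology RealInnerProductSpace

noncomputable section

/-- `n`-dimensional Euclidean space. -/
abbrev Euc (n : ℕ) := EuclideanSpace ℝ (Fin n)

/-- `v` is a subgradient of the extended-real-valued convex function `φ` at `x`. -/
def ESubgradAt {n : ℕ} (φ : Euc n → EReal) (v x : Euc n) : Prop :=
  ∀ y : Euc n, φ x + ((⟪v, y - x⟫ : ℝ) : EReal) ≤ φ y

/-- `v` is a subgradient of the real-valued convex function `φ` at `x`. -/
def RSubgradAt {n : ℕ} (φ : Euc n → ℝ) (v x : Euc n) : Prop :=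
  ∀ y : Euc n, φ x + ⟪v, y - x⟫ ≤ φ y

/-- Convexity of an extended-real-valued function. -/
def EConvexF {n : ℕ} (φ : Euc n → EReal) : Prop :=
  ∀ x y : Euc n, ∀ a b : ℝ, 0 ≤ a → 0 ≤ b → a + b = 1 →
    φ (a • x + b • y) ≤ (a : EReal) * φ x + (b : EReal) * φ y

/-- Properness of an extended-real-valued function: never `⊥` and finite somewhere. -/
def ProperF {n : ℕ} (φ : Euc n → EReal) : Prop :=
  (∀ x, φ x ≠ ⊥) ∧ (∃ x, φ x ≠ ⊤)

/-- The quadratic form `uᵀ B u`. -/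
def quadF {n : ℕ} (B : Matrix (Fin n) (Fin n) ℝ) (u : Euc n) : ℝ :=
  ⟪u, (Matrix.toEuclideanLin B) u⟫

/-- The scaled norm `‖u‖_B = √(uᵀ B u)`. -/
def MNorm {n : ℕ} (B : Matrix (Fin n) (Fin n) ℝ) (u : Euc n) : ℝ :=
  Real.sqrt (quadF B u)

/-- The objective `f = g + h₁ - h₂`. -/
def fObj {n : ℕ} (g : Euc n → ℝ) (h₁ : Euc n → EReal) (h₂ : Euc n → ℝ) (x : Euc n) : EReal :=
  (g x : EReal) + h₁ x - (h₂ x : EReal)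

/-! The subgradient inequality for `h₁` at `x_k⁺`, together with Cauchy–Schwarz in the
`B_k`-inner product, `⟪r, d⟫ ≤ ‖r‖_{B⁻¹} ‖d‖_B`, turns the inexactness condition into the bound
`Δ_k ≤ -θ_k ‖d_k‖²_{B_k} ≤ -θ̄ m ‖d_k‖²` on the predicted change of the objective. The line search
then gives `f(x_{k+1}) + δ η̄ θ̄ m ‖d_k‖² ≤ f(x_k)`; telescoping against the lower bound of `f`
shows that `∑ ‖d_k‖²` converges. -/

namespace LinearMap.IsPositive

variable {E : Type*} [NormedAddCommGroup E] [InnerProductSpace ℝ E]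

theorem inner_map_sq_le {T : E →ₗ[ℝ] E} (hT : T.IsPositive) (x y : E) :
    ⟪x, T y⟫ ^ 2 ≤ ⟪x, T x⟫ * ⟪y, T y⟫ := by
  have hquad : ∀ t : ℝ, 0 ≤ ⟪y, T y⟫ * (t * t) + (2 * ⟪x, T y⟫) * t + ⟪x, T x⟫ := by
    intro t
    have h := hT.inner_nonneg_right (x + t • y)
    have hsymm : ⟪y, T x⟫ = ⟪x, T y⟫ := by rw [← hT.isSymmetric, real_inner_comm]
    simp only [map_add, map_smul, inner_add_left, inner_add_right, real_inner_smul_left,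
      real_inner_smul_right, hsymm] at h
    linarith
  have := discrim_le_zero hquad
  rw [discrim] at this
  linarith

end LinearMap.IsPositive

section

variable {n : ℕ}

theorem quadF_nonneg {B : Matrix (Fin n) (Fin n) ℝ} (hB : B.PosSemidef) (u : Euc n) :
    0 ≤ quadF B u :=
  (Matrix.isPositive_toEuclideanLin_iff.mpr hB).inner_nonneg_right u

theorem posDef_of_mul_sq_norm_le_quadF {B : Matrix (Fin n) (Fin n) ℝ} (hB : B.IsSymm) {m : ℝ}
    (hm : 0 < m) (h : ∀ u, m * ‖u‖ ^ 2 ≤ quadF B u) : B.PosDef := by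
  refine Matrix.posDef_iff_dotProduct_mulVec.mpr ⟨?_, fun v hv => ?_⟩
  · rwa [Matrix.IsHermitian, Matrix.conjTranspose_eq_transpose_of_trivial]
  · have hquad : quadF B (WithLp.toLp 2 v) = star v ⬝ᵥ B *ᵥ v := by
      simp [quadF, EuclideanSpace.inner_eq_star_dotProduct, dotProduct_comm]
    have hpos : 0 < m * ‖WithLp.toLp 2 v‖ ^ 2 := by
      have : WithLp.toLp 2 v ≠ 0 := by simpa using hv
      positivity
    exact hquad ▸ hpos.trans_le (h _)

theorem Matrix.PosDef.inner_le_MNorm_inv_mul_MNorm {B : Matrix (Fin n) (Fin n) ℝ}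
    (hB : B.PosDef) (r d : Euc n) : ⟪r, d⟫ ≤ MNorm B⁻¹ r * MNorm B d := by
  set T := Matrix.toEuclideanLin B
  have hT : T.IsPositive := Matrix.isPositive_toEuclideanLin_iff.mpr hB.posSemidef
  set s := Matrix.toEuclideanLin B⁻¹ r
  have hs : T s = r := by
    simp [T, s, Matrix.toLpLin_apply, Matrix.mulVec_mulVec,
      Matrix.mul_nonsing_inv _ ((Matrix.isUnit_iff_isUnit_det _).mp hB.isUnit)]
  have hrd : ⟪r, d⟫ = ⟪s, T d⟫ := by rw [← hs]; exact hT.isSymmetric s d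
  have hquad : quadF B⁻¹ r = ⟪s, T s⟫ := by rw [hs]; exact real_inner_comm _ _
  rw [MNorm, MNorm, ← Real.sqrt_mul (quadF_nonneg hB.posSemidef.inv _), hrd, hquad]
  exact (le_abs_self _).trans (Real.abs_le_sqrt (hT.inner_map_sq_le s d))

theorem ESubgradAt.toReal_sub_le {φ : Euc n → EReal} {v x y : Euc n} (h : ESubgradAt φ v x)
    (hx : φ x ≠ ⊥) (hy : φ y ≠ ⊤) : (φ x).toReal - (φ y).toReal ≤ ⟪v, x - y⟫ := by
  have hle := h y
  rw [← neg_sub y x, inner_neg_right]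
  generalize φ x = a at hx hle ⊢
  generalize φ y = b at hy hle ⊢
  induction a using EReal.rec with
  | bot => exact absurd rfl hx
  | top => simp_all
  | coe a =>
    induction b using EReal.rec with
    | bot => exact absurd hle (by simp)
    | top => exact absurd rfl hy
    | coe b =>
      simp only [EReal.toReal_coe]
      have : a + ⟪v, y - x⟫ ≤ b := by exact_mod_cast hle
      linarith

/-- The `Δ_k` of the method: the change from `x` to `x'` of the model of `f` in which `g - h₂` is
linearized at `x` with slope `v`. -/
def modelChange (φ : Euc n → EReal) (v x x' : Euc n) : ℝ :=
  ⟪v, x' - x⟫ + (φ x').toReal - (φ x).toReal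

theorem modelChange_le_neg_mul_quadF {φ : Euc n → EReal} {B : Matrix (Fin n) (Fin n) ℝ}
    (hB : B.PosDef) {v r x x' : Euc n} {θ : ℝ} (hx' : φ x' ≠ ⊥) (hx : φ x ≠ ⊤)
    (hsub : ESubgradAt φ (r - v - Matrix.toEuclideanLin B (x' - x)) x')
    (hres : MNorm B⁻¹ r ≤ (1 - θ) * MNorm B (x' - x)) :
    modelChange φ v x x' ≤ -θ * quadF B (x' - x) := by
  have hsubgrad := hsub.toReal_sub_le hx' hx
  have hnorm : MNorm B (x' - x) * MNorm B (x' - x) = quadF B (x' - x) :=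
    Real.mul_self_sqrt (quadF_nonneg hB.posSemidef _)
  have hresidual : ⟪r, x' - x⟫ ≤ (1 - θ) * quadF B (x' - x) :=
    calc ⟪r, x' - x⟫ ≤ MNorm B⁻¹ r * MNorm B (x' - x) := hB.inner_le_MNorm_inv_mul_MNorm r _
      _ ≤ (1 - θ) * MNorm B (x' - x) * MNorm B (x' - x) :=
        mul_le_mul_of_nonneg_right hres (Real.sqrt_nonneg _)
      _ = (1 - θ) * quadF B (x' - x) := by rw [mul_assoc, hnorm]
  have hinner : ⟪r - v - Matrix.toEuclideanLin B (x' - x), x' - x⟫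
      = ⟪r, x' - x⟫ - ⟪v, x' - x⟫ - quadF B (x' - x) := by
    rw [inner_sub_left, inner_sub_left, quadF, real_inner_comm (x' - x) (Matrix.toEuclideanLin B _)]
  unfold modelChange
  linarith

theorem fObj_eq_coe {g : Euc n → ℝ} {h₁ : Euc n → EReal} {h₂ : Euc n → ℝ} {x : Euc n}
    (hx : h₁ x ≠ ⊤) (hx' : h₁ x ≠ ⊥) :
    fObj g h₁ h₂ x = ((g x + (h₁ x).toReal - h₂ x : ℝ) : EReal) := by
  rw [fObj, ← EReal.coe_toReal hx hx']
  norm_cast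

theorem summable_of_add_mul_le {F a : ℕ → ℝ} {c C : ℝ} (hc : 0 < c) (ha : ∀ k, 0 ≤ a k)
    (hC : ∀ k, C ≤ F k) (hdec : ∀ k, F (k + 1) + c * a k ≤ F k) : Summable a := by
  have htelescope : ∀ N, F N + c * ∑ i ∈ Finset.range N, a i ≤ F 0 := by
    intro N
    induction N with
    | zero => simp
    | succ N ih => rw [Finset.sum_range_succ, mul_add]; linarith [hdec N]
  refine summable_of_sum_range_le (c := (F 0 - C) / c) ha fun N => ?_
  rw [le_div_iff₀ hc]
  linarith [htelescope N, hC N]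

end

theorem inexact_proximal_DC_Newton_dk_tendsto_zero_general
    {n : ℕ} (m M δ θbar ηbar : ℝ)
    (g : Euc n → ℝ) (g' : Euc n → Euc n)
    (h₁ : Euc n → EReal) (h₂ : Euc n → ℝ)
    (x xp ξ r d : ℕ → Euc n) (B : ℕ → Matrix (Fin n) (Fin n) ℝ)
    (θ η : ℕ → ℝ)
    (hprop : ProperF h₁)
    (hm : 0 < m)
    (hθbar : 0 < θbar)
    (hδ0 : 0 < δ) (hηbar : 0 < ηbar)
    (hfin : ∀ k, h₁ (x k) ≠ ⊤)
    (hBsymm : ∀ k, (B k).IsSymm)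
    (hBbound : ∀ k, ∀ u : Euc n,
      m * ‖u‖ ^ 2 ≤ quadF (B k) u ∧ quadF (B k) u ≤ M * ‖u‖ ^ 2)
    (hd : ∀ k, d k = xp k - x k)
    (hr : ∀ k, ESubgradAt h₁
      (r k - (g' (x k) - ξ k) - (Matrix.toEuclideanLin (B k)) (d k)) (xp k))
    (hres : ∀ k, MNorm (B k)⁻¹ (r k) ≤ (1 - θ k) * MNorm (B k) (d k))
    (hθ : ∀ k, θbar ≤ θ k ∧ θ k ≤ 1)
    (hη : ∀ k, ηbar ≤ η k ∧ η k ≤ 1)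
    (hls : ∀ k, fObj g h₁ h₂ (x (k + 1)) ≤ fObj g h₁ h₂ (x k) +
      ((δ * η k * (⟪g' (x k) - ξ k, d k⟫ + (h₁ (xp k)).toReal - (h₁ (x k)).toReal) : ℝ) : EReal))
    (hbdd : ∃ c : ℝ, ∀ y : Euc n, (c : EReal) ≤ fObj g h₁ h₂ y) :
    Tendsto (fun k => ‖d k‖) atTop (𝓝 0) := by
  have hchange : ∀ k, modelChange h₁ (g' (x k) - ξ k) (x k) (xp k) ≤ -(θbar * m) * ‖d k‖ ^ 2 := by
    intro k
    have hB := posDef_of_mul_sq_norm_le_quadF (hBsymm k) hm fun u => (hBbound k u).1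
    have h := modelChange_le_neg_mul_quadF hB (hprop.1 _) (hfin k) (hd k ▸ hr k) (hd k ▸ hres k)
    rw [← hd k] at h
    nlinarith [(hBbound k (d k)).1, (hθ k).1, quadF_nonneg hB.posSemidef (d k)]
  set F : ℕ → ℝ := fun k => g (x k) + (h₁ (x k)).toReal - h₂ (x k)
  have hF : ∀ k, fObj g h₁ h₂ (x k) = F k := fun k => fObj_eq_coe (hfin k) (hprop.1 _)
  have hdec : ∀ k, F (k + 1) + δ * ηbar * (θbar * m) * ‖d k‖ ^ 2 ≤ F k := by
    intro k
    have hk : F (k + 1) ≤ F k + δ * η k * modelChange h₁ (g' (x k) - ξ k) (x k) (xp k) := by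
      have h := hls k
      rwa [hF, hF, ← EReal.coe_add, EReal.coe_le_coe_iff, hd k] at h
    nlinarith [hchange k, (hη k).1,
      mul_nonneg (mul_nonneg hδ0.le (mul_pos hθbar hm).le) (sq_nonneg ‖d k‖),
      mul_le_mul_of_nonneg_left (hchange k) (mul_nonneg hδ0.le (hηbar.le.trans (hη k).1))]
  obtain ⟨c, hc⟩ := hbdd
  have hsum := summable_of_add_mul_le (by positivity) (fun k => sq_nonneg ‖d k‖)
    (fun k => by exact_mod_cast (hF k ▸ hc (x k))) hdec
  simpa [Real.sqrt_sq (norm_nonneg _)] using hsum.tendsto_atTop_zero.sqrt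

/-- global convergence `‖d_k‖ → 0` of the inexact proximal DC Newton-type
method when `f = g + h₁ - h₂` is bounded below. -/
theorem inexact_proximal_DC_Newton_dk_tendsto_zero
    {n : ℕ} (L m M δ θbar ηbar : ℝ)
    (g : Euc n → ℝ) (g' : Euc n → Euc n)
    (h₁ : Euc n → EReal) (h₂ : Euc n → ℝ)
    (x xp ξ r d : ℕ → Euc n) (B : ℕ → Matrix (Fin n) (Fin n) ℝ)
    (θ η : ℕ → ℝ)
    (hL : 0 ≤ L)
    (hg : ∀ y : Euc n, HasGradientAt g (g' y) y)
    (hLip : ∀ u v : Euc n, ‖g' u - g' v‖ ≤ L * ‖u - v‖)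
    (hprop : ProperF h₁) (hlsc : LowerSemicontinuous h₁) (hconv : EConvexF h₁)
    (hh₂cont : Continuous h₂) (hh₂conv : ConvexOn ℝ Set.univ h₂)
    (hm : 0 < m) (hmM : m ≤ M)
    (hθbar : 0 < θbar) (hθbar1 : θbar ≤ 1)
    (hδ0 : 0 < δ) (hδ1 : δ < 1) (hηbar : 0 < ηbar)
    (hfin : ∀ k, h₁ (x k) ≠ ⊤) (hfinp : ∀ k, h₁ (xp k) ≠ ⊤)
    (hξ : ∀ k, RSubgradAt h₂ (ξ k) (x k))
    (hBsymm : ∀ k, (B k).IsSymm)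
    (hBbound : ∀ k, ∀ u : Euc n,
      m * ‖u‖ ^ 2 ≤ quadF (B k) u ∧ quadF (B k) u ≤ M * ‖u‖ ^ 2)
    (hd : ∀ k, d k = xp k - x k)
    (hr : ∀ k, ESubgradAt h₁
      (r k - (g' (x k) - ξ k) - (Matrix.toEuclideanLin (B k)) (d k)) (xp k))
    (hres : ∀ k, MNorm (B k)⁻¹ (r k) ≤ (1 - θ k) * MNorm (B k) (d k))
    (hθ : ∀ k, θbar ≤ θ k ∧ θ k ≤ 1)
    (hη : ∀ k, ηbar ≤ η k ∧ η k ≤ 1)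
    (hstep : ∀ k, x (k + 1) = x k + η k • d k)
    (hls : ∀ k, fObj g h₁ h₂ (x (k + 1)) ≤ fObj g h₁ h₂ (x k) +
      ((δ * η k * (⟪g' (x k) - ξ k, d k⟫ + (h₁ (xp k)).toReal - (h₁ (x k)).toReal) : ℝ) : EReal))
    (hbdd : ∃ c : ℝ, ∀ y : Euc n, (c : EReal) ≤ fObj g h₁ h₂ y) :
    Tendsto (fun k => ‖d k‖) atTop (𝓝 0) :=
  inexact_proximal_DC_Newton_dk_tendsto_zero_general m M δ θbar ηbar g g' h₁ h₂ x xp ξ r d B θ η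
    hprop hm hθbar hδ0 hηbar hfin hBsymm hBbound hd hr hres hθ hη hls hbdd
end
end

section
/- Let g : ℝⁿ → ℝ be differentiable with L-Lipschitz gradient, h₁ : ℝⁿ → ℝ ∪ {+∞} a proper lower semicontinuous convex function, h₂ : ℝⁿ → ℝ a continuous convex function, f = g + h₁ − h₂. Let x, x⁺ ∈ ℝⁿ with h₁(x) and h₁(x⁺) finite, d = x⁺ − x, ξ ∈ ∂h₂(x), B a symmetric matrix with m‖u‖² ≤ uᵀBu for all u (m > 0), θ̄ ∈ (0,1], and suppose r ∈ ℝⁿ satisfies r − (∇g(x) − ξ) − B d ∈ ∂h₁(x⁺) and ‖r‖_{B⁻¹} ≤ (1 − θ̄)‖d‖_B. If f is directionally differentiable at x and x is a directional stationary point, i.e., the one-sided directional derivative f′(x; p) = lim_{η→0⁺} (f(x + ηp) − f(x))/η is nonnegative for every direction p ∈ ℝⁿ, then d = 0. -/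
open Matrix Filter Topology RealInnerProductSpace

noncomputable section

/-!
Along `d = x⁺ - x`, convexity of `h₁` on the segment `[x, x⁺]` and the subgradient inequality
for `h₂` at `x` bound the directional derivative `f′(x; d)` by
`⟪∇g(x) - ξ, d⟫ + h₁(x⁺) - h₁(x)`. The subgradient inequality for `h₁` at `x⁺` bounds
`h₁(x⁺) - h₁(x)` by `⟪r - (∇g(x) - ξ) - B d, d⟫`, so `f′(x; d) ≤ ⟪r, d⟫ - ‖d‖²_B`.
Cauchy–Schwarz for the dual pair of norms `‖·‖_{B⁻¹}`, `‖·‖_B` and the residual bound give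
`⟪r, d⟫ ≤ (1 - θ̄)‖d‖²_B`, hence `0 ≤ f′(x; d) ≤ -θ̄‖d‖²_B`, which forces `d = 0`.
-/

namespace Matrix

variable {n : ℕ} {B : Matrix (Fin n) (Fin n) ℝ}

lemma toEuclideanLin_isSymmetric (hB : B.IsSymm) : (toEuclideanLin B).IsSymmetric :=
  isSymmetric_toEuclideanLin_iff.mpr (isHermitian_iff_isSymm.mpr hB)

lemma isUnit_det_of_quadF_pos (hpos : ∀ u, u ≠ 0 → 0 < quadF B u) : IsUnit B.det := by
  rw [← isUnit_iff_isUnit_det, ← mulVec_injective_iff_isUnit]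
  intro u v huv
  by_contra hne
  have h := hpos (WithLp.toLp 2 (u - v)) (by simpa [sub_eq_zero] using hne)
  simp [quadF, huv] at h

lemma toEuclideanLin_inv_apply_apply (hB : IsUnit B.det) (w : Euc n) :
    toEuclideanLin B⁻¹ (toEuclideanLin B w) = w := by
  rw [← LinearMap.comp_apply, ← toLpLin_mul_same, nonsing_inv_mul _ hB, toLpLin_one,
    LinearMap.id_apply]

lemma toEuclideanLin_apply_inv_apply (hB : IsUnit B.det) (w : Euc n) :
    toEuclideanLin B (toEuclideanLin B⁻¹ w) = w := by
  rw [← LinearMap.comp_apply, ← toLpLin_mul_same, mul_nonsing_inv _ hB, toLpLin_one,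
    LinearMap.id_apply]

lemma quadF_inv_apply (hB : IsUnit B.det) (w : Euc n) :
    quadF B⁻¹ (toEuclideanLin B w) = quadF B w := by
  rw [quadF, toEuclideanLin_inv_apply_apply hB, quadF, real_inner_comm]

lemma inner_apply_le_MNorm_mul_MNorm (hB : B.IsSymm) (hpos : ∀ u, 0 ≤ quadF B u) (u v : Euc n) :
    ⟪u, toEuclideanLin B v⟫ ≤ MNorm B u * MNorm B v := by
  let β : LinearMap.BilinForm ℝ (Euc n) := (innerₗ (Euc n)).compl₂ (toEuclideanLin B)
  have hsymm : LinearMap.IsSymm β := ⟨fun u v => by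
    simp only [β, LinearMap.compl₂_apply, innerₗ_apply_apply, RingHom.id_apply,
      ← toEuclideanLin_isSymmetric hB u v, real_inner_comm]⟩
  have hsq := β.apply_sq_le_of_symm hpos hsymm u v
  rw [MNorm, MNorm, ← Real.sqrt_mul (hpos u)]
  exact (le_abs_self _).trans (Real.abs_le_sqrt hsq)

lemma inner_le_MNorm_inv_mul_MNorm (hB : B.IsSymm) (hpos : ∀ u, 0 ≤ quadF B u)
    (hdet : IsUnit B.det) (r d : Euc n) : ⟪r, d⟫ ≤ MNorm B⁻¹ r * MNorm B d := by
  -- with `r = B w`: `⟪r, d⟫ = ⟪w, B d⟫` and `‖r‖_{B⁻¹} = ‖w‖_B`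
  rw [← toEuclideanLin_apply_inv_apply hdet r, MNorm, quadF_inv_apply hdet, ← MNorm,
    toEuclideanLin_isSymmetric hB]
  exact inner_apply_le_MNorm_mul_MNorm hB hpos _ d

lemma inner_le_of_MNorm_inv_le (hB : B.IsSymm) (hpos : ∀ u, 0 ≤ quadF B u)
    (hdet : IsUnit B.det) {r d : Euc n} {c : ℝ} (h : MNorm B⁻¹ r ≤ c * MNorm B d) :
    ⟪r, d⟫ ≤ c * quadF B d :=
  calc ⟪r, d⟫ ≤ MNorm B⁻¹ r * MNorm B d := inner_le_MNorm_inv_mul_MNorm hB hpos hdet r d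
    _ ≤ c * MNorm B d * MNorm B d := mul_le_mul_of_nonneg_right h (Real.sqrt_nonneg _)
    _ = c * quadF B d := by rw [mul_assoc, MNorm, Real.mul_self_sqrt (hpos d)]

end Matrix

section

variable {n : ℕ}

lemma ESubgradAt.sub_le_inner {φ : Euc n → EReal} {v x y : Euc n} {a b : ℝ}
    (h : ESubgradAt φ v y) (hx : φ x = a) (hy : φ y = b) : b - a ≤ ⟪v, y - x⟫ := by
  have hxy := h x
  rw [hx, hy, ← EReal.coe_add, EReal.coe_le_coe_iff, ← neg_sub y x, inner_neg_right] at hxy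
  linarith

lemma EConvexF.le_add_smul_sub {φ : Euc n → EReal} (hφ : EConvexF φ) {x y : Euc n} {a b t : ℝ}
    (hx : φ x = a) (hy : φ y = b) (ht0 : 0 ≤ t) (ht1 : t ≤ 1) :
    φ (x + t • (y - x)) ≤ ((a + t * (b - a) : ℝ) : EReal) := by
  have h := hφ x y (1 - t) t (by linarith) ht0 (by ring)
  rw [hx, hy] at h
  convert h using 1
  · congr 1
    module
  · norm_cast
    ring

lemma fObj_add_smul_sub_sub_le {g : Euc n → ℝ} {h₁ : Euc n → EReal} {h₂ : Euc n → ℝ}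
    {x y ξ : Euc n} {a b t : ℝ} (hbot : ∀ z, h₁ z ≠ ⊥) (hconv : EConvexF h₁)
    (hx : h₁ x = a) (hy : h₁ y = b) (hξ : RSubgradAt h₂ ξ x) (ht0 : 0 ≤ t) (ht1 : t ≤ 1) :
    fObj g h₁ h₂ (x + t • (y - x)) - fObj g h₁ h₂ x ≤
      ((g (x + t • (y - x)) - g x + t * (b - a) - t * ⟪ξ, y - x⟫ : ℝ) : EReal) := by
  set z := x + t • (y - x)
  have hz := hconv.le_add_smul_sub hx hy ht0 ht1
  obtain ⟨e, he⟩ : ∃ e : ℝ, h₁ z = e :=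
    ⟨_, (EReal.coe_toReal (ne_top_of_le_ne_top (EReal.coe_ne_top _) hz) (hbot z)).symm⟩
  have hh₂ : h₂ x + t * ⟪ξ, y - x⟫ ≤ h₂ z := by
    simpa [z, real_inner_smul_right] using hξ z
  rw [he, EReal.coe_le_coe_iff] at hz
  simp only [fObj, he, hx]
  norm_cast
  linarith

lemma le_of_tendsto_slope_fObj {g : Euc n → ℝ} {g'x : Euc n} {h₁ : Euc n → EReal}
    {h₂ : Euc n → ℝ} {x y ξ : Euc n} {a b : ℝ} {c : EReal} (hg : HasGradientAt g g'x x)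
    (hbot : ∀ z, h₁ z ≠ ⊥) (hconv : EConvexF h₁) (hx : h₁ x = a) (hy : h₁ y = b)
    (hξ : RSubgradAt h₂ ξ x)
    (hc : Tendsto (fun t : ℝ => ((t⁻¹ : ℝ) : EReal) *
      (fObj g h₁ h₂ (x + t • (y - x)) - fObj g h₁ h₂ x)) (𝓝[>] 0) (𝓝 c)) :
    c ≤ ((⟪g'x, y - x⟫ + (b - a) - ⟪ξ, y - x⟫ : ℝ) : EReal) := by
  have hslope := (hg.hasFDerivAt.hasLineDerivAt (y - x)).tendsto_slope_zero_right
  rw [InnerProductSpace.toDual_apply_apply] at hslope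
  refine le_of_tendsto_of_tendsto hc
    (EReal.tendsto_coe.mpr ((hslope.add_const (b - a)).sub_const ⟪ξ, y - x⟫)) ?_
  filter_upwards [Ioc_mem_nhdsGT one_pos] with t ⟨ht0, ht1⟩
  calc ((t⁻¹ : ℝ) : EReal) * (fObj g h₁ h₂ (x + t • (y - x)) - fObj g h₁ h₂ x)
      ≤ ((t⁻¹ : ℝ) : EReal) *
          ((g (x + t • (y - x)) - g x + t * (b - a) - t * ⟪ξ, y - x⟫ : ℝ) : EReal) :=
        mul_le_mul_of_nonneg_left (fObj_add_smul_sub_sub_le hbot hconv hx hy hξ ht0.le ht1)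
          (by exact_mod_cast (inv_pos.mpr ht0).le)
    _ = _ := by
        rw [smul_eq_mul]
        norm_cast
        field_simp

end

theorem directional_stationary_implies_d_eq_zero_general
    {n : ℕ} (m θbar : ℝ)
    (g : Euc n → ℝ) (g' : Euc n → Euc n)
    (h₁ : Euc n → EReal) (h₂ : Euc n → ℝ)
    (x xp ξ r d : Euc n) (B : Matrix (Fin n) (Fin n) ℝ)
    (hg : ∀ y : Euc n, HasGradientAt g (g' y) y)
    (hprop : ProperF h₁) (hconv : EConvexF h₁)
    (hfin : h₁ x ≠ ⊤) (hfinp : h₁ xp ≠ ⊤)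
    (hd : d = xp - x)
    (hξ : RSubgradAt h₂ ξ x)
    (hBsymm : B.IsSymm)
    (hm : 0 < m)
    (hBlow : ∀ u : Euc n, m * ‖u‖ ^ 2 ≤ quadF B u)
    (hθbar0 : 0 < θbar)
    (hr : ESubgradAt h₁ (r - (g' x - ξ) - (Matrix.toEuclideanLin B) d) xp)
    (hres : MNorm B⁻¹ r ≤ (1 - θbar) * MNorm B d)
    -- `f` is directionally differentiable at `x` and `x` is a directional stationary
    -- point: for every direction `p`, the one-sided directional derivative
    -- `f′(x; p) = lim_{η→0⁺} (f(x + ηp) - f(x))/η` exists and is nonnegative.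
    (hdir : ∀ p : Euc n, ∃ c : EReal, 0 ≤ c ∧
      Tendsto (fun t : ℝ => ((t⁻¹ : ℝ) : EReal) * (fObj g h₁ h₂ (x + t • p) - fObj g h₁ h₂ x))
        (𝓝[>] (0 : ℝ)) (𝓝 c)) :
    d = 0 := by
  have hpos (u : Euc n) (hu : u ≠ 0) : 0 < quadF B u :=
    lt_of_lt_of_le (by have := norm_pos_iff.mpr hu; positivity) (hBlow u)
  have hnonneg (u : Euc n) : 0 ≤ quadF B u := le_trans (by positivity) (hBlow u)
  obtain ⟨a, ha⟩ : ∃ a : ℝ, h₁ x = a := ⟨_, (EReal.coe_toReal hfin (hprop.1 x)).symm⟩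
  obtain ⟨b, hb⟩ : ∃ b : ℝ, h₁ xp = b := ⟨_, (EReal.coe_toReal hfinp (hprop.1 xp)).symm⟩
  obtain ⟨c, hc0, hc⟩ := hdir d
  have hdescent : 0 ≤ ⟪g' x, d⟫ + (b - a) - ⟪ξ, d⟫ := by
    subst hd
    exact_mod_cast hc0.trans (le_of_tendsto_slope_fObj (hg x) hprop.1 hconv ha hb hξ hc)
  have hsubgrad : b - a ≤ ⟪r - (g' x - ξ) - Matrix.toEuclideanLin B d, d⟫ :=
    hd ▸ hr.sub_le_inner ha hb
  have hresidual : ⟪r, d⟫ ≤ (1 - θbar) * quadF B d :=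
    Matrix.inner_le_of_MNorm_inv_le hBsymm hnonneg (Matrix.isUnit_det_of_quadF_pos hpos) hres
  have hquad : θbar * quadF B d ≤ 0 := by
    have hBd : ⟪Matrix.toEuclideanLin B d, d⟫ = quadF B d := real_inner_comm _ _
    rw [inner_sub_left, inner_sub_left, inner_sub_left, hBd] at hsubgrad
    linarith
  by_contra hne
  linarith [mul_pos hθbar0 (hpos d hne)]

/-- if `x` is a directional stationary point of `f = g + h₁ - h₂`
(and `f` is directionally differentiable at `x`), then the inexact proximal DC Newton
direction `d = x⁺ - x` vanishes. -/
theorem directional_stationary_implies_d_eq_zero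
    {n : ℕ} (L m θbar : ℝ)
    (g : Euc n → ℝ) (g' : Euc n → Euc n)
    (h₁ : Euc n → EReal) (h₂ : Euc n → ℝ)
    (x xp ξ r d : Euc n) (B : Matrix (Fin n) (Fin n) ℝ)
    (hL : 0 ≤ L)
    (hg : ∀ y : Euc n, HasGradientAt g (g' y) y)
    (hLip : ∀ u v : Euc n, ‖g' u - g' v‖ ≤ L * ‖u - v‖)
    (hprop : ProperF h₁) (hlsc : LowerSemicontinuous h₁) (hconv : EConvexF h₁)
    (hh₂cont : Continuous h₂) (hh₂conv : ConvexOn ℝ Set.univ h₂)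
    (hfin : h₁ x ≠ ⊤) (hfinp : h₁ xp ≠ ⊤)
    (hd : d = xp - x)
    (hξ : RSubgradAt h₂ ξ x)
    (hBsymm : B.IsSymm)
    (hm : 0 < m)
    (hBlow : ∀ u : Euc n, m * ‖u‖ ^ 2 ≤ quadF B u)
    (hθbar0 : 0 < θbar) (hθbar1 : θbar ≤ 1)
    (hr : ESubgradAt h₁ (r - (g' x - ξ) - (Matrix.toEuclideanLin B) d) xp)
    (hres : MNorm B⁻¹ r ≤ (1 - θbar) * MNorm B d)
    -- `f` is directionally differentiable at `x` and `x` is a directional stationary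
    -- point: for every direction `p`, the one-sided directional derivative
    -- `f′(x; p) = lim_{η→0⁺} (f(x + ηp) - f(x))/η` exists and is nonnegative.
    (hdir : ∀ p : Euc n, ∃ c : EReal, 0 ≤ c ∧
      Tendsto (fun t : ℝ => ((t⁻¹ : ℝ) : EReal) * (fObj g h₁ h₂ (x + t • p) - fObj g h₁ h₂ x))
        (𝓝[>] (0 : ℝ)) (𝓝 c)) :
    d = 0 :=
  directional_stationary_implies_d_eq_zero_general m θbar g g' h₁ h₂ x xp ξ r d B hg hprop hconv
    hfin hfinp hd hξ hBsymm hm hBlow hθbar0 hr hres hdir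
end
end

section
/- Let s, z ∈ ℝⁿ be linearly independent with sᵀz > 0, let τ > 0, γ > 0, and define v = √(sᵀs)·(z/(sᵀz) − s/(sᵀs)) and φ* = −(sᵀz)² / ((sᵀs)(zᵀz) − (sᵀz)²), which satisfies φ* < 0. If φ > φ*, then the matrix B = τI − τ ssᵀ/(sᵀs) + γ zzᵀ/(sᵀz) + τφ vvᵀ is symmetric positive definite. -/
/-!
The quadratic form of `B` is `τ (|x|² - (sᵀx)²/(sᵀs)) + γ (zᵀx)²/(sᵀz) + τφ (vᵀx)²`. Since `v` is a
multiple of the component `u = z - (sᵀz/sᵀs) s` of `z` orthogonal to `s`, Cauchy–Schwarz on the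
orthogonal complement of `s` gives `|x|² - (sᵀx)²/(sᵀs) ≥ -φ* (vᵀx)²`, so the form is at least
`τ(φ - φ*)(vᵀx)² + γ (zᵀx)²/(sᵀz) ≥ 0`. If this lower bound vanishes then `x ⊥ v, z`, hence `x ⊥ s`,
and the form is `τ|x|² > 0`. Linear independence enters through
`(sᵀs)(zᵀz) - (sᵀz)² = (sᵀs)|u|² > 0`.
-/

open Matrix

section
variable {ι : Type*} [Fintype ι]

theorem dotProduct_self_pos {x : ι → ℝ} (hx : x ≠ 0) : 0 < x ⬝ᵥ x := by
  simpa using dotProduct_self_star_pos_iff.mpr hx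

theorem sq_dotProduct_le_dotProduct_self_mul (u x : ι → ℝ) :
    (u ⬝ᵥ x) ^ 2 ≤ (u ⬝ᵥ u) * (x ⬝ᵥ x) := by
  simpa only [dotProduct, sq] using Finset.sum_mul_sq_le_sq_mul_sq Finset.univ u x

theorem dotProduct_mulVec_vecMulVec_self (a x : ι → ℝ) :
    x ⬝ᵥ (vecMulVec a a *ᵥ x) = (a ⬝ᵥ x) ^ 2 := by
  simp [vecMulVec_mulVec, dotProduct_smul, dotProduct_comm x a, sq]

theorem isHermitian_smul_vecMulVec_self (c : ℝ) (a : ι → ℝ) : (c • vecMulVec a a).IsHermitian := by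
  simpa using (posSemidef_vecMulVec_self_star a).isHermitian.smul (IsSelfAdjoint.all c)

theorem sq_dotProduct_le_of_dotProduct_eq_zero {s u : ι → ℝ} (hsu : s ⬝ᵥ u = 0) (x : ι → ℝ) :
    (u ⬝ᵥ x) ^ 2 ≤ (u ⬝ᵥ u) * (x ⬝ᵥ x - (s ⬝ᵥ x) ^ 2 / (s ⬝ᵥ s)) := by
  set y := x - (s ⬝ᵥ x / s ⬝ᵥ s) • s
  have huy : u ⬝ᵥ y = u ⬝ᵥ x := by
    simp [y, dotProduct_sub, dotProduct_smul, dotProduct_comm u s, hsu]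
  have hyy : y ⬝ᵥ y = x ⬝ᵥ x - (s ⬝ᵥ x) ^ 2 / (s ⬝ᵥ s) := by
    rcases eq_or_ne (s ⬝ᵥ s) 0 with hs | hs
    · simp [y, hs]
    · simp only [y, dotProduct_sub, sub_dotProduct, dotProduct_smul, smul_dotProduct, smul_eq_mul,
        dotProduct_comm x s]
      field_simp
      ring
  simpa [huy, hyy] using sq_dotProduct_le_dotProduct_self_mul u y

section
variable (s z : ι → ℝ)

theorem dotProduct_sub_proj_eq_zero (hs : s ⬝ᵥ s ≠ 0) :
    s ⬝ᵥ (z - (s ⬝ᵥ z / s ⬝ᵥ s) • s) = 0 := by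
  simp only [dotProduct_sub, dotProduct_smul, smul_eq_mul]
  field_simp
  ring

theorem dotProduct_self_sub_proj (hs : s ⬝ᵥ s ≠ 0) :
    (z - (s ⬝ᵥ z / s ⬝ᵥ s) • s) ⬝ᵥ (z - (s ⬝ᵥ z / s ⬝ᵥ s) • s)
      = ((s ⬝ᵥ s) * (z ⬝ᵥ z) - (s ⬝ᵥ z) ^ 2) / (s ⬝ᵥ s) := by
  simp only [dotProduct_sub, sub_dotProduct, dotProduct_smul, smul_dotProduct, smul_eq_mul,
    dotProduct_comm z s]
  field_simp
  ring

theorem gram_pos_of_linearIndependent (h : LinearIndependent ℝ ![s, z]) :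
    0 < (s ⬝ᵥ s) * (z ⬝ᵥ z) - (s ⬝ᵥ z) ^ 2 := by
  have hS : 0 < s ⬝ᵥ s := dotProduct_self_pos (h.ne_zero 0)
  have hu : z - (s ⬝ᵥ z / s ⬝ᵥ s) • s ≠ 0 := fun hu ↦ by
    have := (LinearIndependent.pair_iff.mp h (-(s ⬝ᵥ z / s ⬝ᵥ s)) 1
      (by rw [neg_smul, one_smul, neg_add_eq_sub, hu])).2
    exact one_ne_zero this
  have := dotProduct_self_pos hu
  rw [dotProduct_self_sub_proj s z hS.ne'] at this
  exact (div_pos_iff_of_pos_right hS).mp this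

variable {s z} {v : ι → ℝ}
  (hv : v = Real.sqrt (s ⬝ᵥ s) • ((s ⬝ᵥ z)⁻¹ • z - (s ⬝ᵥ s)⁻¹ • s))
include hv

-- `s` lies in the span of `z` and `v`.
theorem dotProduct_eq_zero_of_dotProduct_eq_zero (hS : 0 < s ⬝ᵥ s) {x : ι → ℝ}
    (hvx : v ⬝ᵥ x = 0) (hzx : z ⬝ᵥ x = 0) : s ⬝ᵥ x = 0 := by
  simp_all [smul_dotProduct, sub_dotProduct, hS.ne', (Real.sqrt_pos.mpr hS).ne']

-- `v` is a multiple of the component of `z` orthogonal to `s`, so this is Cauchy–Schwarz on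
-- the orthogonal complement of `s`; the constant on the left is `-φ*`.
theorem mul_sq_dotProduct_le (hS : 0 < s ⬝ᵥ s) (hP : s ⬝ᵥ z ≠ 0)
    (hD : 0 < (s ⬝ᵥ s) * (z ⬝ᵥ z) - (s ⬝ᵥ z) ^ 2) (x : ι → ℝ) :
    (s ⬝ᵥ z) ^ 2 / ((s ⬝ᵥ s) * (z ⬝ᵥ z) - (s ⬝ᵥ z) ^ 2) * (v ⬝ᵥ x) ^ 2
      ≤ x ⬝ᵥ x - (s ⬝ᵥ x) ^ 2 / (s ⬝ᵥ s) := by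
  set S := s ⬝ᵥ s
  set P := s ⬝ᵥ z
  set D := S * (z ⬝ᵥ z) - P ^ 2
  set u := z - (P / S) • s
  have hCS := sq_dotProduct_le_of_dotProduct_eq_zero (dotProduct_sub_proj_eq_zero s z hS.ne') x
  rw [dotProduct_self_sub_proj s z hS.ne'] at hCS
  have hvx : (v ⬝ᵥ x) ^ 2 = S / P ^ 2 * (u ⬝ᵥ x) ^ 2 := by
    simp only [hv, u, smul_dotProduct, sub_dotProduct, smul_eq_mul, mul_pow, Real.sq_sqrt hS.le]
    field_simp
  calc P ^ 2 / D * (v ⬝ᵥ x) ^ 2 = S / D * (u ⬝ᵥ x) ^ 2 := by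
        rw [hvx]; field_simp
    _ ≤ S / D * (D / S * (x ⬝ᵥ x - (s ⬝ᵥ x) ^ 2 / S)) := by gcongr
    _ = x ⬝ᵥ x - (s ⬝ᵥ x) ^ 2 / S := by field_simp

end

theorem dotProduct_mulVec_smul_one_add_vecMulVec [DecidableEq ι] (s z v x : ι → ℝ) (τ c d e : ℝ) :
    x ⬝ᵥ ((τ • (1 : Matrix ι ι ℝ) - c • vecMulVec s s + d • vecMulVec z z + e • vecMulVec v v) *ᵥ x)
      = τ * (x ⬝ᵥ x) - c * (s ⬝ᵥ x) ^ 2 + d * (z ⬝ᵥ x) ^ 2 + e * (v ⬝ᵥ x) ^ 2 := by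
  simp only [add_mulVec, sub_mulVec, smul_mulVec, one_mulVec, dotProduct_add, dotProduct_sub,
    dotProduct_smul, dotProduct_mulVec_vecMulVec_self, smul_eq_mul]

theorem isHermitian_smul_one_add_vecMulVec [DecidableEq ι] (s z v : ι → ℝ) (τ c d e : ℝ) :
    (τ • (1 : Matrix ι ι ℝ) - c • vecMulVec s s + d • vecMulVec z z
      + e • vecMulVec v v).IsHermitian :=
  (((isHermitian_one.smul (IsSelfAdjoint.all τ)).sub (isHermitian_smul_vecMulVec_self c s)).add
    (isHermitian_smul_vecMulVec_self d z)).add (isHermitian_smul_vecMulVec_self e v)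

theorem posDef_broydenFamily_of_lt [DecidableEq ι] {s z v : ι → ℝ} {τ γ φ : ℝ}
    (hS : 0 < s ⬝ᵥ s) (hP : 0 < s ⬝ᵥ z) (hD : 0 < (s ⬝ᵥ s) * (z ⬝ᵥ z) - (s ⬝ᵥ z) ^ 2)
    (hτ : 0 < τ) (hγ : 0 < γ)
    (hv : v = Real.sqrt (s ⬝ᵥ s) • ((s ⬝ᵥ z)⁻¹ • z - (s ⬝ᵥ s)⁻¹ • s))
    (hφ : -(s ⬝ᵥ z) ^ 2 / ((s ⬝ᵥ s) * (z ⬝ᵥ z) - (s ⬝ᵥ z) ^ 2) < φ) :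
    (τ • (1 : Matrix ι ι ℝ) - (τ / (s ⬝ᵥ s)) • vecMulVec s s + (γ / (s ⬝ᵥ z)) • vecMulVec z z
      + (τ * φ) • vecMulVec v v).PosDef := by
  refine .of_dotProduct_mulVec_pos (isHermitian_smul_one_add_vecMulVec ..) fun x hx ↦ ?_
  rw [star_trivial, dotProduct_mulVec_smul_one_add_vecMulVec]
  have hX := dotProduct_self_pos hx
  have hY := mul_sq_dotProduct_le hv hS hP.ne' hD x
  by_cases h : v ⬝ᵥ x = 0 ∧ z ⬝ᵥ x = 0
  · have hsx := dotProduct_eq_zero_of_dotProduct_eq_zero hv hS h.1 h.2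
    simp [h.1, h.2, hsx, hτ, hX]
  · set c := (s ⬝ᵥ z) ^ 2 / ((s ⬝ᵥ s) * (z ⬝ᵥ z) - (s ⬝ᵥ z) ^ 2)
    have hφc : 0 < φ + c := by rw [neg_div] at hφ; linarith
    calc 0 < τ * (φ + c) * (v ⬝ᵥ x) ^ 2 + γ / (s ⬝ᵥ z) * (z ⬝ᵥ x) ^ 2 := by
          rcases not_and_or.mp h with hvx | hzx
          · exact add_pos_of_pos_of_nonneg (mul_pos (mul_pos hτ hφc) (by positivity))
              (by positivity)
          · exact add_pos_of_nonneg_of_pos (mul_nonneg (mul_nonneg hτ.le hφc.le) (sq_nonneg _))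
              (by positivity)
      _ ≤ τ * (x ⬝ᵥ x - (s ⬝ᵥ x) ^ 2 / (s ⬝ᵥ s)) + γ / (s ⬝ᵥ z) * (z ⬝ᵥ x) ^ 2
          + τ * φ * (v ⬝ᵥ x) ^ 2 := by nlinarith [mul_le_mul_of_nonneg_left hY hτ.le]
      _ = _ := by ring

/-- positive definiteness of the memoryless modified spectral scaling
Broyden family matrix `B = τI - τssᵀ/(sᵀs) + γzzᵀ/(sᵀz) + τφvvᵀ` for `φ > φ*`. -/
theorem broyden_family_posDef
    {n : ℕ} (s z : Fin n → ℝ) (τ γ φ : ℝ)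
    (hind : LinearIndependent ℝ ![s, z])
    (hsz : 0 < s ⬝ᵥ z) (hτ : 0 < τ) (hγ : 0 < γ)
    (v : Fin n → ℝ)
    (hv : v = Real.sqrt (s ⬝ᵥ s) • ((s ⬝ᵥ z)⁻¹ • z - (s ⬝ᵥ s)⁻¹ • s))
    (φstar : ℝ)
    (hφstar : φstar = -(s ⬝ᵥ z) ^ 2 / ((s ⬝ᵥ s) * (z ⬝ᵥ z) - (s ⬝ᵥ z) ^ 2))
    (hφ : φstar < φ) :
    φstar < 0 ∧
      (τ • (1 : Matrix (Fin n) (Fin n) ℝ)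
        - (τ / (s ⬝ᵥ s)) • vecMulVec s s
        + (γ / (s ⬝ᵥ z)) • vecMulVec z z
        + (τ * φ) • vecMulVec v v).PosDef := by
  have hS : 0 < s ⬝ᵥ s := dotProduct_self_pos (hind.ne_zero 0)
  have hD := gram_pos_of_linearIndependent s z hind
  subst hφstar
  exact ⟨div_neg_of_neg_of_pos (neg_neg_of_pos (pow_pos hsz 2)) hD,
    posDef_broydenFamily_of_lt hS hsz hD hτ hγ hv hφ⟩
end
end

section
/- Let g : ℝⁿ → ℝ be differentiable with L-Lipschitz gradient. Let x, x′ ∈ ℝⁿ, s = x′ − x ≠ 0, z = (∇g(x′) − ∇g(x)) + νs with 0 ≤ ν ≤ ν̄, and suppose sᵀz ≥ ν̲‖s‖² with ν̲ > 0. Let v = √(sᵀs)·(z/(sᵀz) − s/(sᵀs)), φ* = −(sᵀz)² / ((sᵀs)(zᵀz) − (sᵀz)²) (when s and z are linearly independent; set the last term to zero when v = 0), and suppose φ satisfies φ̄₁φ* ≤ φ ≤ φ̄₂ with constants 0 ≤ φ̄₁ < 1 and φ̄₂ > 0, γ ∈ [γ̲, γ̄] with 0 < γ̲ ≤ γ̄,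 and τ ∈ [τ̲, τ̄] with 0 < τ̲ ≤ τ̄. Then there exist constants m > 0 and M > 0, depending only on L, ν̲, ν̄, φ̄₁, φ̄₂, γ̲, γ̄, τ̲, τ̄ (and not on x, x′), such that the matrix B = τI − τ ssᵀ/(sᵀs) + γ zzᵀ/(sᵀz) + τφ vvᵀ satisfies m‖u‖² ≤ uᵀBu ≤ M‖u‖² for all u ∈ ℝⁿ. -/
open Matrix Filter Topology RealInnerProductSpace

noncomputable section

/-- The vector `v = √(sᵀs)(z/(sᵀz) - s/(sᵀs))`. -/
def vvec {n : ℕ} (s z : Euc n) : Euc n :=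
  Real.sqrt (⟪s, s⟫) • ((⟪s, z⟫)⁻¹ • z - (⟪s, s⟫)⁻¹ • s)

/-- The critical parameter `φ* = -(sᵀz)²/((sᵀs)(zᵀz) - (sᵀz)²)`. -/
def phiStar {n : ℕ} (s z : Euc n) : ℝ :=
  -(⟪s, z⟫ : ℝ) ^ 2 / ((⟪s, s⟫ : ℝ) * (⟪z, z⟫ : ℝ) - (⟪s, z⟫ : ℝ) ^ 2)

/-- The memoryless modified spectral scaling Broyden family matrix
`B = τI - τssᵀ/(sᵀs) + γzzᵀ/(sᵀz) + τφvvᵀ`. -/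
def Bmat {n : ℕ} (τ γ φ : ℝ) (s z : Euc n) : Matrix (Fin n) (Fin n) ℝ :=
  τ • (1 : Matrix (Fin n) (Fin n) ℝ)
    - (τ / (⟪s, s⟫ : ℝ)) • vecMulVec (s : Fin n → ℝ) (s : Fin n → ℝ)
    + (γ / (⟪s, z⟫ : ℝ)) • vecMulVec (z : Fin n → ℝ) (z : Fin n → ℝ)
    + (τ * φ) • vecMulVec (vvec s z : Fin n → ℝ) (vvec s z : Fin n → ℝ)

/-! Write `P = I - ssᵀ/(sᵀs)` for the orthogonal projection onto `s^⊥`. Then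
`B = τP + γzzᵀ/(sᵀz) + τφvvᵀ` with `v = (‖s‖/sᵀz) Pz ∈ s^⊥`. The Lipschitz bound gives
`‖z‖ ≤ (L + ν̄)‖s‖`, and together with `sᵀz ≥ ν̲‖s‖²` this bounds the last two terms above by
multiples of `‖u‖²`. Since `φ* = -1/‖v‖²`, the condition `φ ≥ φ̄₁φ*` and Cauchy–Schwarz in `s^⊥`
give `τφ(vᵀu)² ≥ -τφ̄₁‖Pu‖²`, so `uᵀBu ≥ τ(1 - φ̄₁)‖Pu‖² + γ(zᵀu)²/(sᵀz)`. The last term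
controls the component of `u` along `s` unless that component is dominated by `‖Pu‖²`, which
gives the lower bound. -/

section PerpComp

variable {E : Type*} [NormedAddCommGroup E] [InnerProductSpace ℝ E]

lemma real_inner_sq_le (x y : E) : ⟪x, y⟫ ^ 2 ≤ ‖x‖ ^ 2 * ‖y‖ ^ 2 := by
  rw [← mul_pow, ← sq_abs]
  exact pow_le_pow_left₀ (abs_nonneg _) (abs_real_inner_le_norm x y) 2

def perpComp (s x : E) : E := x - (⟪s, x⟫ / ‖s‖ ^ 2) • s

lemma inner_perpComp_right (s x y : E) :
    ⟪y, perpComp s x⟫ = ⟪y, x⟫ - ⟪s, x⟫ / ‖s‖ ^ 2 * ⟪y, s⟫ := by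
  simp only [perpComp, inner_sub_right, real_inner_smul_right]

lemma inner_perpComp_self_right (s x : E) : ⟪s, perpComp s x⟫ = 0 := by
  rcases eq_or_ne s 0 with rfl | hs
  · simp
  · rw [inner_perpComp_right, real_inner_self_eq_norm_sq]
    field_simp
    ring

lemma norm_perpComp_sq (s x : E) : ‖perpComp s x‖ ^ 2 = ‖x‖ ^ 2 - ⟪s, x⟫ ^ 2 / ‖s‖ ^ 2 := by
  rcases eq_or_ne s 0 with rfl | hs
  · simp [perpComp]
  · rw [perpComp, norm_sub_sq_real, norm_smul, real_inner_smul_right, Real.norm_eq_abs,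
      mul_pow, sq_abs, real_inner_comm]
    field_simp
    ring

lemma norm_perpComp_sq_le (s x : E) : ‖perpComp s x‖ ^ 2 ≤ ‖x‖ ^ 2 := by
  rw [norm_perpComp_sq]
  exact sub_le_self _ (by positivity)

lemma perpComp_smul_self (s : E) (a : ℝ) : perpComp s (a • s) = 0 := by
  rcases eq_or_ne s 0 with rfl | hs
  · simp [perpComp]
  · rw [perpComp, real_inner_smul_right, real_inner_self_eq_norm_sq, mul_div_assoc,
      div_self (by positivity), mul_one, sub_self]

variable {s z : E} {νlo C : ℝ}

lemma sq_inner_div_inner_le (hνlo : 0 < νlo) (hs : s ≠ 0) (hsz : νlo * ‖s‖ ^ 2 ≤ ⟪s, z⟫)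
    (hz : ‖z‖ ≤ C * ‖s‖) (u : E) : ⟪z, u⟫ ^ 2 / ⟪s, z⟫ ≤ C ^ 2 / νlo * ‖u‖ ^ 2 := by
  calc ⟪z, u⟫ ^ 2 / ⟪s, z⟫ ≤ C ^ 2 * ‖s‖ ^ 2 * ‖u‖ ^ 2 / (νlo * ‖s‖ ^ 2) := by
        gcongr
        calc ⟪z, u⟫ ^ 2 ≤ ‖z‖ ^ 2 * ‖u‖ ^ 2 := real_inner_sq_le z u
          _ ≤ C ^ 2 * ‖s‖ ^ 2 * ‖u‖ ^ 2 := by gcongr; rw [← mul_pow]; gcongr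
    _ = C ^ 2 / νlo * ‖u‖ ^ 2 := by field_simp

lemma sub_le_sq_inner_div_inner (hνlo : 0 < νlo) (hs : s ≠ 0) (hsz : νlo * ‖s‖ ^ 2 ≤ ⟪s, z⟫)
    (hz : ‖z‖ ≤ C * ‖s‖) (u : E) :
    νlo / 2 * (⟪s, u⟫ ^ 2 / ‖s‖ ^ 2) - C ^ 2 / νlo * ‖perpComp s u‖ ^ 2
      ≤ ⟪z, u⟫ ^ 2 / ⟪s, z⟫ := by
  have hY : 0 < ⟪s, z⟫ := lt_of_lt_of_le (by positivity) hsz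
  set r := ⟪z, perpComp s u⟫
  set x := ⟪s, u⟫ / ‖s‖ ^ 2 * ⟪s, z⟫
  have hb : ⟪z, u⟫ = x + r := by
    simp only [r, x, inner_perpComp_right, real_inner_comm s z]; ring
  have hr : r ^ 2 ≤ C ^ 2 * ‖s‖ ^ 2 * ‖perpComp s u‖ ^ 2 :=
    (real_inner_sq_le z _).trans (by gcongr; rw [← mul_pow]; gcongr)
  have hx : νlo / 2 * (⟪s, u⟫ ^ 2 / ‖s‖ ^ 2) ≤ x ^ 2 / (2 * ⟪s, z⟫) := by
    rw [le_div_iff₀ (by positivity)]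
    simp only [x]
    field_simp
    nlinarith [sq_nonneg ⟪s, u⟫]
  have hrY : r ^ 2 / ⟪s, z⟫ ≤ C ^ 2 / νlo * ‖perpComp s u‖ ^ 2 :=
    calc r ^ 2 / ⟪s, z⟫ ≤ C ^ 2 * ‖s‖ ^ 2 * ‖perpComp s u‖ ^ 2 / (νlo * ‖s‖ ^ 2) := by
          gcongr
      _ = C ^ 2 / νlo * ‖perpComp s u‖ ^ 2 := by field_simp
  -- `(x + r)² ≥ x² / 2 - r²`, since the difference is `(x + 2r)² / 2`
  have hxr : x ^ 2 / (2 * ⟪s, z⟫) - r ^ 2 / ⟪s, z⟫ ≤ (x + r) ^ 2 / ⟪s, z⟫ := by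
    rw [div_sub_div _ _ (by positivity) hY.ne', div_le_div_iff₀ (by positivity) hY]
    nlinarith [sq_nonneg (x + 2 * r), mul_pos hY hY]
  rw [hb]
  linarith

lemma neg_mul_le_mul_sq_inner {v u : E} {w φ φbar₁ : ℝ} (hφ₁ : 0 ≤ φbar₁) (hw : 0 ≤ w)
    (hvu : ⟪v, u⟫ ^ 2 ≤ ‖v‖ ^ 2 * w) (hφ : v ≠ 0 → φbar₁ * -(‖v‖ ^ 2)⁻¹ ≤ φ) :
    -(φbar₁ * w) ≤ φ * ⟪v, u⟫ ^ 2 := by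
  rcases le_or_gt 0 φ with hφ0 | hφ0
  · nlinarith [sq_nonneg ⟪v, u⟫, mul_nonneg hφ₁ hw]
  rcases eq_or_ne v 0 with rfl | hv
  · simpa using mul_nonneg hφ₁ hw
  have hV : 0 < ‖v‖ ^ 2 := by positivity
  have hφV : -φbar₁ ≤ φ * ‖v‖ ^ 2 := by
    have := mul_le_mul_of_nonneg_right (hφ hv) hV.le
    rwa [mul_assoc, neg_mul, inv_mul_cancel₀ hV.ne', mul_neg_one] at this
  calc -(φbar₁ * w) ≤ φ * ‖v‖ ^ 2 * w := by nlinarith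
    _ ≤ φ * ⟪v, u⟫ ^ 2 := by rw [mul_assoc]; exact mul_le_mul_of_nonpos_left hvu hφ0.le

end PerpComp

lemma min_mul_add_le_mul_add_mul {c k K γlo γ w T X : ℝ} (hc : 0 < c) (hk : 0 < k) (hK : 0 ≤ K)
    (hγlo : 0 < γlo) (hγ : γlo ≤ γ) (hw : 0 ≤ w) (hT : 0 ≤ T) (hX : 0 ≤ X)
    (hXT : k * T - K * w ≤ X) :
    min (γlo * k / 2) (c * k / (k + 2 * K)) * (w + T) ≤ c * w + γ * X := by
  -- if `2Kw ≤ kT` then `X ≥ kT/2`; otherwise `T` is dominated by `w`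
  have hkK : 0 < k + 2 * K := by positivity
  rcases le_or_gt (2 * K * w) (k * T) with h | h
  · have hmc : min (γlo * k / 2) (c * k / (k + 2 * K)) ≤ c :=
      (min_le_right _ _).trans (div_le_of_le_mul₀ hkK.le hc.le (by nlinarith))
    have hmT : min (γlo * k / 2) (c * k / (k + 2 * K)) * T ≤ γ * X :=
      calc _ ≤ γlo * k / 2 * T := by gcongr; exact min_le_left _ _
        _ ≤ γ * X := by nlinarith
    nlinarith
  · calc _ ≤ c * k / (k + 2 * K) * (w + T) := by gcongr; exact min_le_right _ _
      _ ≤ c * w := by rw [div_mul_eq_mul_div, div_le_iff₀ hkK]; nlinarith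
      _ ≤ c * w + γ * X := le_add_of_nonneg_right (by nlinarith)

section Vvec

variable {n : ℕ} {s z : Euc n}

lemma vvec_eq_smul_perpComp (hY : ⟪s, z⟫ ≠ 0) :
    vvec s z = (‖s‖ / ⟪s, z⟫) • perpComp s z := by
  rw [vvec, perpComp, real_inner_self_eq_norm_sq, Real.sqrt_sq (norm_nonneg s)]
  simp only [smul_sub, smul_smul]
  congr 2
  field_simp

lemma inner_vvec_self_right (hY : ⟪s, z⟫ ≠ 0) : ⟪vvec s z, s⟫ = 0 := by
  rw [vvec_eq_smul_perpComp hY, real_inner_smul_left, real_inner_comm s, inner_perpComp_self_right,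
    mul_zero]

lemma norm_vvec_sq (hY : ⟪s, z⟫ ≠ 0) :
    ‖vvec s z‖ ^ 2 = ‖s‖ ^ 2 / ⟪s, z⟫ ^ 2 * ‖perpComp s z‖ ^ 2 := by
  rw [vvec_eq_smul_perpComp hY, norm_smul, Real.norm_eq_abs, mul_pow, sq_abs, div_pow]

lemma phiStar_eq (hY : ⟪s, z⟫ ≠ 0) : phiStar s z = -(‖vvec s z‖ ^ 2)⁻¹ := by
  have hs : s ≠ 0 := by rintro rfl; simp at hY
  rw [phiStar, norm_vvec_sq hY, norm_perpComp_sq, real_inner_self_eq_norm_sq,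
    real_inner_self_eq_norm_sq z, real_inner_comm z s]
  field_simp

lemma linearIndependent_of_vvec_ne_zero (hY : ⟪s, z⟫ ≠ 0) (hv : vvec s z ≠ 0) :
    LinearIndependent ℝ ![s, z] := by
  have hs : s ≠ 0 := by rintro rfl; simp at hY
  refine (LinearIndependent.pair_iff' hs).mpr fun a ha => hv ?_
  rw [vvec_eq_smul_perpComp hY, ← ha, perpComp_smul_self, smul_zero]

lemma sq_inner_vvec_le (hY : ⟪s, z⟫ ≠ 0) (u : Euc n) :
    ⟪vvec s z, u⟫ ^ 2 ≤ ‖vvec s z‖ ^ 2 * ‖perpComp s u‖ ^ 2 := by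
  have h : ⟪vvec s z, perpComp s u⟫ = ⟪vvec s z, u⟫ := by
    rw [inner_perpComp_right, inner_vvec_self_right hY, mul_zero, sub_zero]
  rw [← h]
  exact real_inner_sq_le _ _

lemma norm_vvec_sq_le {νlo C : ℝ} (hνlo : 0 < νlo) (hs : s ≠ 0)
    (hsz : νlo * ‖s‖ ^ 2 ≤ ⟪s, z⟫) (hz : ‖z‖ ≤ C * ‖s‖) : ‖vvec s z‖ ^ 2 ≤ C ^ 2 / νlo ^ 2 := by
  have hY : 0 < ⟪s, z⟫ := lt_of_lt_of_le (by positivity) hsz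
  rw [norm_vvec_sq hY.ne']
  calc ‖s‖ ^ 2 / ⟪s, z⟫ ^ 2 * ‖perpComp s z‖ ^ 2
      ≤ ‖s‖ ^ 2 / (νlo * ‖s‖ ^ 2) ^ 2 * (C ^ 2 * ‖s‖ ^ 2) := by
        gcongr
        exact (norm_perpComp_sq_le s z).trans (by rw [← mul_pow]; gcongr)
    _ = C ^ 2 / νlo ^ 2 := by field_simp

end Vvec

section QuadF

variable {n : ℕ}

lemma quadF_add (A B : Matrix (Fin n) (Fin n) ℝ) (u : Euc n) :
    quadF (A + B) u = quadF A u + quadF B u := by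
  simp [quadF, inner_add_right]

lemma quadF_sub (A B : Matrix (Fin n) (Fin n) ℝ) (u : Euc n) :
    quadF (A - B) u = quadF A u - quadF B u := by
  simp [quadF, inner_sub_right]

lemma quadF_smul (c : ℝ) (A : Matrix (Fin n) (Fin n) ℝ) (u : Euc n) :
    quadF (c • A) u = c * quadF A u := by
  simp [quadF, inner_smul_right]

lemma quadF_one (u : Euc n) : quadF 1 u = ‖u‖ ^ 2 := by
  simp [quadF]

lemma quadF_vecMulVec (a u : Euc n) : quadF (vecMulVec (a : Fin n → ℝ) a) u = ⟪a, u⟫ ^ 2 := by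
  simp only [quadF, Matrix.toEuclideanLin, Matrix.toLpLin_apply, vecMulVec_mulVec]
  have h : a.ofLp ⬝ᵥ u.ofLp = ⟪a, u⟫ := by
    simp [EuclideanSpace.inner_eq_star_dotProduct, dotProduct_comm]
  rw [op_smul_eq_smul, WithLp.toLp_smul, WithLp.toLp_ofLp, real_inner_smul_right, h,
    real_inner_comm, sq]

lemma quadF_Bmat (τ γ φ : ℝ) (s z u : Euc n) :
    quadF (Bmat τ γ φ s z) u
      = τ * ‖perpComp s u‖ ^ 2 + γ / ⟪s, z⟫ * ⟪z, u⟫ ^ 2 + τ * φ * ⟪vvec s z, u⟫ ^ 2 := by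
  simp only [Bmat, quadF_add, quadF_sub, quadF_smul, quadF_one, quadF_vecMulVec, norm_perpComp_sq,
    real_inner_self_eq_norm_sq]
  ring

variable {s z : Euc n} {νlo C : ℝ}

lemma min_mul_norm_sq_le_quadF_Bmat {φbar₁ γlo τlo γ τ φ : ℝ} (hνlo : 0 < νlo) (hs : s ≠ 0)
    (hsz : νlo * ‖s‖ ^ 2 ≤ ⟪s, z⟫) (hz : ‖z‖ ≤ C * ‖s‖) (hφ₁0 : 0 ≤ φbar₁) (hφ₁1 : φbar₁ < 1)
    (hγlo : 0 < γlo) (hγ : γlo ≤ γ) (hτlo : 0 < τlo) (hτ : τlo ≤ τ)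
    (hφ : LinearIndependent ℝ ![s, z] → φbar₁ * phiStar s z ≤ φ) (u : Euc n) :
    min (γlo * (νlo / 2) / 2) (τlo * (1 - φbar₁) * (νlo / 2) / (νlo / 2 + 2 * (C ^ 2 / νlo)))
      * ‖u‖ ^ 2 ≤ quadF (Bmat τ γ φ s z) u := by
  have hY : 0 < ⟪s, z⟫ := lt_of_lt_of_le (by positivity) hsz
  have hφv : -(φbar₁ * ‖perpComp s u‖ ^ 2) ≤ φ * ⟪vvec s z, u⟫ ^ 2 :=
    neg_mul_le_mul_sq_inner hφ₁0 (sq_nonneg _) (sq_inner_vvec_le hY.ne' u) fun hv => by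
      simpa only [phiStar_eq hY.ne'] using hφ (linearIndependent_of_vvec_ne_zero hY.ne' hv)
  have hsplit : ‖u‖ ^ 2 = ‖perpComp s u‖ ^ 2 + ⟪s, u⟫ ^ 2 / ‖s‖ ^ 2 := by
    rw [norm_perpComp_sq]; ring
  have hγX : γ / ⟪s, z⟫ * ⟪z, u⟫ ^ 2 = γ * (⟪z, u⟫ ^ 2 / ⟪s, z⟫) := by ring
  rw [hsplit, quadF_Bmat, hγX]
  calc _ ≤ τlo * (1 - φbar₁) * ‖perpComp s u‖ ^ 2 + γ * (⟪z, u⟫ ^ 2 / ⟪s, z⟫) :=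
        min_mul_add_le_mul_add_mul (mul_pos hτlo (sub_pos.2 hφ₁1)) (by positivity)
          (by positivity) hγlo hγ (sq_nonneg _) (by positivity) (by positivity)
          (sub_le_sq_inner_div_inner hνlo hs hsz hz u)
    _ ≤ _ := by
      have hτφ := mul_le_mul_of_nonneg_left hφv (hτlo.trans_le hτ).le
      have hτw : τlo * (1 - φbar₁) * ‖perpComp s u‖ ^ 2 ≤ τ * (1 - φbar₁) * ‖perpComp s u‖ ^ 2 := by
        have := sub_pos.2 hφ₁1
        gcongr
      linarith

lemma quadF_Bmat_le {φbar₂ γhi τhi γ τ φ : ℝ} (hνlo : 0 < νlo) (hs : s ≠ 0)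
    (hsz : νlo * ‖s‖ ^ 2 ≤ ⟪s, z⟫) (hz : ‖z‖ ≤ C * ‖s‖) (hφ₂ : 0 ≤ φbar₂) (hγ0 : 0 ≤ γ)
    (hγ : γ ≤ γhi) (hτ0 : 0 ≤ τ) (hτ : τ ≤ τhi) (hφ : φ ≤ φbar₂) (u : Euc n) :
    quadF (Bmat τ γ φ s z) u
      ≤ (τhi + γhi * (C ^ 2 / νlo) + τhi * φbar₂ * (C ^ 2 / νlo ^ 2)) * ‖u‖ ^ 2 := by
  have hY : 0 < ⟪s, z⟫ := lt_of_lt_of_le (by positivity) hsz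
  have hperp : τ * ‖perpComp s u‖ ^ 2 ≤ τhi * ‖u‖ ^ 2 :=
    mul_le_mul hτ (norm_perpComp_sq_le s u) (sq_nonneg _) (hτ0.trans hτ)
  have hzu : γ / ⟪s, z⟫ * ⟪z, u⟫ ^ 2 ≤ γhi * (C ^ 2 / νlo) * ‖u‖ ^ 2 := by
    rw [div_mul_eq_mul_div, mul_div_assoc, mul_assoc]
    exact mul_le_mul hγ (sq_inner_div_inner_le hνlo hs hsz hz u) (by positivity) (hγ0.trans hγ)
  have hv : ⟪vvec s z, u⟫ ^ 2 ≤ C ^ 2 / νlo ^ 2 * ‖u‖ ^ 2 :=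
    (sq_inner_vvec_le hY.ne' u).trans (mul_le_mul (norm_vvec_sq_le hνlo hs hsz hz)
      (norm_perpComp_sq_le s u) (sq_nonneg _) (by positivity))
  have hτφ : τ * φ ≤ τhi * φbar₂ :=
    (mul_le_mul_of_nonneg_left hφ hτ0).trans (mul_le_mul_of_nonneg_right hτ hφ₂)
  have hφv : τ * φ * ⟪vvec s z, u⟫ ^ 2 ≤ τhi * φbar₂ * (C ^ 2 / νlo ^ 2) * ‖u‖ ^ 2 := by
    rw [mul_assoc _ (C ^ 2 / νlo ^ 2)]
    exact mul_le_mul hτφ hv (sq_nonneg _) (mul_nonneg (hτ0.trans hτ) hφ₂)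
  rw [quadF_Bmat]
  linarith

end QuadF

lemma norm_sub_add_smul_le {E : Type*} [SeminormedAddCommGroup E] [NormedSpace ℝ E]
    {g' : E → E} {L ν νhi : ℝ} (hLip : ∀ u v, ‖g' u - g' v‖ ≤ L * ‖u - v‖) (hν0 : 0 ≤ ν)
    (hν : ν ≤ νhi) (x x' : E) : ‖g' x' - g' x + ν • (x' - x)‖ ≤ (L + νhi) * ‖x' - x‖ :=
  calc _ ≤ L * ‖x' - x‖ + ν * ‖x' - x‖ := by
        refine (norm_add_le _ _).trans (add_le_add (hLip x' x) ?_)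
        rw [norm_smul, Real.norm_of_nonneg hν0]
    _ ≤ (L + νhi) * ‖x' - x‖ := by rw [add_mul]; gcongr

theorem broyden_family_uniform_bounds_general
    {n : ℕ} (L νlo νhi φbar₁ φbar₂ γlo γhi τlo τhi : ℝ)
    (g' : Euc n → Euc n)
    (hLip : ∀ u v : Euc n, ‖g' u - g' v‖ ≤ L * ‖u - v‖)
    (hνlo : 0 < νlo)
    (hφ₁0 : 0 ≤ φbar₁) (hφ₁1 : φbar₁ < 1) (hφ₂ : 0 < φbar₂)
    (hγlo : 0 < γlo) (hγ : γlo ≤ γhi) (hτlo : 0 < τlo) (hτ : τlo ≤ τhi) :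
    ∃ m M : ℝ, 0 < m ∧ 0 < M ∧
      ∀ (x x' : Euc n) (ν γ τ φ : ℝ) (s z : Euc n),
        s = x' - x → s ≠ 0 →
        z = (g' x' - g' x) + ν • s →
        0 ≤ ν → ν ≤ νhi →
        νlo * ‖s‖ ^ 2 ≤ ⟪s, z⟫ →
        γlo ≤ γ → γ ≤ γhi → τlo ≤ τ → τ ≤ τhi →
        (LinearIndependent ℝ ![s, z] → φbar₁ * phiStar s z ≤ φ) → φ ≤ φbar₂ →
        ∀ u : Euc n,
          m * ‖u‖ ^ 2 ≤ quadF (Bmat τ γ φ s z) u ∧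
          quadF (Bmat τ γ φ s z) u ≤ M * ‖u‖ ^ 2 := by
  set C := L + νhi
  have hγhi : 0 < γhi := hγlo.trans_le hγ
  have hτhi : 0 < τhi := hτlo.trans_le hτ
  have hφ₁ : 0 < 1 - φbar₁ := sub_pos.2 hφ₁1
  refine ⟨min (γlo * (νlo / 2) / 2)
      (τlo * (1 - φbar₁) * (νlo / 2) / (νlo / 2 + 2 * (C ^ 2 / νlo))),
    τhi + γhi * (C ^ 2 / νlo) + τhi * φbar₂ * (C ^ 2 / νlo ^ 2),
    lt_min (by positivity) (by positivity), by positivity, ?_⟩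
  rintro x x' ν γ τ φ s z rfl hs rfl hν0 hν hsz hγ₁ hγ₂ hτ₁ hτ₂ hφ hφ' u
  have hz := norm_sub_add_smul_le hLip hν0 hν x x'
  exact ⟨min_mul_norm_sq_le_quadF_Bmat hνlo hs hsz hz hφ₁0 hφ₁1 hγlo hγ₁ hτlo hτ₁ hφ u,
    quadF_Bmat_le hνlo hs hsz hz hφ₂.le (hγlo.trans_le hγ₁).le hγ₂ (hτlo.trans_le hτ₁).le hτ₂ hφ' u⟩

/-- uniform bounds `m‖u‖² ≤ uᵀBu ≤ M‖u‖²` for the memoryless modified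
spectral scaling Broyden family matrices, with constants depending only on the data
`L, ν̲, ν̄, φ̄₁, φ̄₂, γ̲, γ̄, τ̲, τ̄` and not on the points `x, x'`. -/
theorem broyden_family_uniform_bounds
    {n : ℕ} (L νlo νhi φbar₁ φbar₂ γlo γhi τlo τhi : ℝ)
    (g : Euc n → ℝ) (g' : Euc n → Euc n)
    (hL : 0 ≤ L)
    (hg : ∀ y : Euc n, HasGradientAt g (g' y) y)
    (hLip : ∀ u v : Euc n, ‖g' u - g' v‖ ≤ L * ‖u - v‖)
    (hνlo : 0 < νlo) (hνhi : 0 ≤ νhi)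
    (hφ₁0 : 0 ≤ φbar₁) (hφ₁1 : φbar₁ < 1) (hφ₂ : 0 < φbar₂)
    (hγlo : 0 < γlo) (hγ : γlo ≤ γhi) (hτlo : 0 < τlo) (hτ : τlo ≤ τhi) :
    ∃ m M : ℝ, 0 < m ∧ 0 < M ∧
      ∀ (x x' : Euc n) (ν γ τ φ : ℝ) (s z : Euc n),
        s = x' - x → s ≠ 0 →
        z = (g' x' - g' x) + ν • s →
        0 ≤ ν → ν ≤ νhi →
        νlo * ‖s‖ ^ 2 ≤ ⟪s, z⟫ →
        γlo ≤ γ → γ ≤ γhi → τlo ≤ τ → τ ≤ τhi →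
        (LinearIndependent ℝ ![s, z] → φbar₁ * phiStar s z ≤ φ) → φ ≤ φbar₂ →
        ∀ u : Euc n,
          m * ‖u‖ ^ 2 ≤ quadF (Bmat τ γ φ s z) u ∧
          quadF (Bmat τ γ φ s z) u ≤ M * ‖u‖ ^ 2 :=
  broyden_family_uniform_bounds_general L νlo νhi φbar₁ φbar₂ γlo γhi τlo τhi g' hLip hνlo hφ₁0 hφ₁1
    hφ₂ hγlo hγ hτlo hτ
end
end
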